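/- Let μ, ν ≥ 0, let 1 ≤ j_1 < … < j_μ ≤ N and 1 ≤ k_1 < … < k_ν ≤ N, and set J = {j_1, …, j_μ} and K = {k_1, …, k_ν}. If J ∪ K = {1, …, N} and J ∩ K ≠ ∅, then in the algebra Λ the product ζ_{j_1} ζ_{j_2} ⋯ ζ_{j_μ} ζ*_{k_1} ζ*_{k_2} ⋯ ζ*_{k_ν} equals 0. -/

import Mathlib

/-!
In `Λ` the one-forms `ζ_i` commute pairwise up to nonzero scalars and square to zero (relation
(iv) for `k < l` and `k = l`), and so do the `ζ*_i`; relation (v) gives `∑ ζ_i ζ*_i = 0`. For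
`m ∈ J ∩ K`, move `ζ_m` to the end of the `ζ`-block and `ζ*_m` to the front of the `ζ*`-block
and replace the product `ζ_m ζ*_m` in the middle by `-∑_{i ≠ m} ζ_i ζ*_i`. Since every `i`
lies in `J` or in `K`, each term then contains `ζ_i` twice in the first block or `ζ*_i` twice in
the second, and vanishes.
-/

noncomputable section

open scoped BigOperators

namespace QSphere

/-- `q` viewed as a complex number. -/
def qc (q : ℝ) : ℂ := (q : ℂ)

/-- `Q = q - q⁻¹` as a complex number. -/
def Qc (q : ℝ) : ℂ := qc q - (qc q)⁻¹

/-- The (1-based) integer index of `i : Fin N`. -/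
def exZ {N : ℕ} (i : Fin N) : ℤ := (i : ℕ) + 1

/-- The R-matrix coefficient `R^{ij}_{kl}`. -/
def Rm (q : ℝ) {N : ℕ} (i j k l : Fin N) : ℂ :=
  if i = l ∧ j = k ∧ i ≠ j then 1
  else if i = j ∧ j = k ∧ k = l then qc q
  else if i = k ∧ j = l ∧ i < j then Qc q
  else 0

/-- The inverse R-matrix coefficient `(R⁻¹)^{ij}_{kl}`. -/
def Rinv (q : ℝ) {N : ℕ} (i j k l : Fin N) : ℂ :=
  if i = l ∧ j = k ∧ i ≠ j then 1
  else if i = j ∧ j = k ∧ k = l then (qc q)⁻¹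
  else if i = k ∧ j = l ∧ j < i then -(Qc q)
  else 0

/-- `R̄^{ij}_{kl} = R^{lk}_{ji}`. -/
def Rbar (q : ℝ) {N : ℕ} (i j k l : Fin N) : ℂ := Rm q l k j i

/-- `(R̄⁻¹)^{ij}_{kl} = (R⁻¹)^{lk}_{ji}`. -/
def Rbarinv (q : ℝ) {N : ℕ} (i j k l : Fin N) : ℂ := Rinv q l k j i

/-- `(R→)^{ij}_{kl} = R^{ki}_{lj}`. -/
def Rright (q : ℝ) {N : ℕ} (i j k l : Fin N) : ℂ := Rm q k i l j

/-- `(R←⁻¹)^{ij}_{kl} = q^{2l-2i} (R⁻¹)^{jl}_{ik}`. -/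
def Rlinv (q : ℝ) {N : ℕ} (i j k l : Fin N) : ℂ :=
  qc q ^ (2 * exZ l - 2 * exZ i) * Rinv q j l i k

/-- Generator index set for the differential algebra `Λ`:
`inl (inl i)` is `z_{i+1}`, `inl (inr i)` is `z*_{i+1}`,
`inr (inl i)` is `ζ_{i+1} = dz_{i+1}`, `inr (inr i)` is `ζ*_{i+1} = dz*_{i+1}`. -/
abbrev GenL (N : ℕ) := (Fin N ⊕ Fin N) ⊕ (Fin N ⊕ Fin N)

/-- The free unital `ℂ`-algebra on the `4N` generators. -/
abbrev FB (N : ℕ) := FreeAlgebra ℂ (GenL N)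

/-- The generator `z_{i+1}`. -/
def wz {N : ℕ} (i : Fin N) : FB N := FreeAlgebra.ι ℂ (Sum.inl (Sum.inl i))
/-- The generator `z*_{i+1}`. -/
def wzs {N : ℕ} (i : Fin N) : FB N := FreeAlgebra.ι ℂ (Sum.inl (Sum.inr i))
/-- The generator `ζ_{i+1}` (representing `dz_{i+1}`). -/
def wze {N : ℕ} (i : Fin N) : FB N := FreeAlgebra.ι ℂ (Sum.inr (Sum.inl i))
/-- The generator `ζ*_{i+1}` (representing `dz*_{i+1}`). -/
def wzes {N : ℕ} (i : Fin N) : FB N := FreeAlgebra.ι ℂ (Sum.inr (Sum.inr i))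

/-- `θ = q Q⁻¹ Σ_i q^{-2i} z*_i ζ_i`. -/
def thf (N : ℕ) (q : ℝ) : FB N :=
  (qc q * (Qc q)⁻¹) • ∑ i, (qc q ^ (-(2 * exZ i))) • (wzs i * wze i)

/-- The defining relations of the differential algebra `Λ` modelling the higher
order differential calculus `Γ^∧_*` on `S_q^{2N-1}`: the two-sided ideal
generated by the listed elements is divided out. -/
inductive LambdaRel (N : ℕ) (q : ℝ) : FB N → FB N → Prop
  | r1 {i j : Fin N} (h : i < j) :
      LambdaRel N q (wz i * wz j - qc q • (wz j * wz i)) 0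
  | r2 {i j : Fin N} (h : i < j) :
      LambdaRel N q (wzs i * wzs j - (qc q)⁻¹ • (wzs j * wzs i)) 0
  | r3 {i j : Fin N} (h : i ≠ j) :
      LambdaRel N q (wz i * wzs j - qc q • (wzs j * wz i)) 0
  | r4 (i : Fin N) :
      LambdaRel N q
        (wz i * wzs i - wzs i * wz i
          + ((qc q)⁻¹ * Qc q) • ∑ k ∈ Finset.univ.filter (fun k => i < k), wz k * wzs k) 0
  | r5 : LambdaRel N q (∑ i, wz i * wzs i - 1) 0
  | r6 : LambdaRel N q
      (∑ i, wz i * wzes i + ∑ i, (qc q ^ (-(2 * exZ i))) • (wzs i * wze i)) 0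
  | r7 (k l : Fin N) :
      LambdaRel N q
        (wze k * wz l - qc q • ∑ a, ∑ b, Rm q a b k l • (wz a * wze b)) 0
  | r8 (k l : Fin N) :
      LambdaRel N q
        (wzes k * wzs l - (qc q)⁻¹ • ∑ a, ∑ b, Rbarinv q a b k l • (wzs a * wzes b)) 0
  | r9 (k l : Fin N) :
      LambdaRel N q
        (wze k * wzs l - (qc q)⁻¹ • ∑ a, ∑ b, Rlinv q a b k l • (wzs a * wze b)
          - (qc q * Qc q) • (wz k * wzes l)
          - (Qc q ^ 2) • (wz k * wzs l * thf N q)) 0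
  | r10 (k l : Fin N) :
      LambdaRel N q
        (wzes k * wz l - qc q • ∑ a, ∑ b, Rright q a b k l • (wz a * wzes b)
          + ((qc q)⁻¹ * Qc q) • (wzs k * wze l)
          - (Qc q ^ 2) • (wzs k * wz l * thf N q)) 0
  | r11 (k l : Fin N) :
      LambdaRel N q
        (wze k * wze l + qc q • ∑ a, ∑ b, Rm q a b k l • (wze a * wze b)) 0
  | r12 (k l : Fin N) :
      LambdaRel N q
        (wzes k * wzes l + (qc q)⁻¹ • ∑ a, ∑ b, Rbarinv q a b k l • (wzes a * wzes b)) 0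
  | r13 (k l : Fin N) :
      LambdaRel N q
        ((qc q ^ (-3:ℤ)) • ∑ a, ∑ b, Rlinv q a b k l •
            (wzes a * wze b + (Qc q ^ 2) • (wzs a * wze b * thf N q))
          + wze k * wzes l + (Qc q ^ 2) • (wz k * wzes l * thf N q)
          + (Qc q ^ 2 * (Qc q ^ 2 + 1)) • (wz k * wzs l * thf N q * thf N q)) 0
  | r14 : LambdaRel N q
      (∑ i, wze i * wzes i + ∑ i, (qc q ^ (-(2 * exZ i))) • (wzes i * wze i)) 0
  | r15 : LambdaRel N q (∑ i, (qc q ^ (-(2 * exZ i))) • (wzes i * wze i)) 0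
  | r16 : LambdaRel N q (thf N q * thf N q) 0
  | r17 (k : Fin N) : LambdaRel N q (thf N q * wze k + wze k * thf N q) 0
  | r18 (k : Fin N) : LambdaRel N q (thf N q * wzes k + wzes k * thf N q) 0

/-- The differential algebra `Λ` modelling `Γ^∧_*`. -/
abbrev Lam (N : ℕ) (q : ℝ) := RingQuot (LambdaRel N q)

/-- The one-form `ζ_i = dz_i` in `Λ`. -/
def Zeta (N : ℕ) (q : ℝ) (i : Fin N) : Lam N q :=
  RingQuot.mkAlgHom ℂ (LambdaRel N q) (wze i)

/-- The one-form `ζ*_i = dz*_i` in `Λ`. -/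
def Zetas (N : ℕ) (q : ℝ) (i : Fin N) : Lam N q :=
  RingQuot.mkAlgHom ℂ (LambdaRel N q) (wzes i)

/-- The `(2N-2)`-form `Θ_j`: the ordered product of all `ζ_i`, `i ≠ j`,
followed by the ordered product of all `ζ*_i`, `i ≠ j`. -/
def ThetaJ (N : ℕ) (q : ℝ) (j : Fin N) : Lam N q :=
  (((Finset.univ.erase j).sort (· ≤ ·)).map (Zeta N q)).prod *
  (((Finset.univ.erase j).sort (· ≤ ·)).map (Zetas N q)).prod

end QSphere

def PairwiseQCommute (𝕜 : Type*) {ι R : Type*} [Mul R] [SMul 𝕜 R] (x : ι → R) : Prop :=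
  ∀ i j, ∃ c : 𝕜, x i * x j = c • (x j * x i)

section PairwiseQCommute

variable {ι 𝕜 R : Type*} [Semiring R]

theorem PairwiseQCommute.of_lt [Field 𝕜] [Algebra 𝕜 R] [LinearOrder ι] {x : ι → R} {c : 𝕜}
    (hc : c ≠ 0) (h : ∀ i j, i < j → x j * x i = c • (x i * x j)) : PairwiseQCommute 𝕜 x := by
  intro i j
  rcases lt_trichotomy i j with hij | rfl | hij
  · exact ⟨c⁻¹, by rw [h i j hij, inv_smul_smul₀ hc]⟩
  · exact ⟨1, (one_smul 𝕜 _).symm⟩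
  · exact ⟨c, h j i hij⟩

variable [CommSemiring 𝕜] [Algebra 𝕜 R]

namespace PairwiseQCommute

variable {x : ι → R}

theorem exists_mul_prod_map_eq_smul (hx : PairwiseQCommute 𝕜 x) (m : ι) (l : List ι) :
    ∃ c : 𝕜, x m * (l.map x).prod = c • ((l.map x).prod * x m) := by
  induction l with
  | nil => exact ⟨1, by simp⟩
  | cons b t ih =>
    obtain ⟨c₁, h₁⟩ := hx m b
    obtain ⟨c₂, h₂⟩ := ih
    refine ⟨c₁ * c₂, ?_⟩
    rw [List.map_cons, List.prod_cons, ← mul_assoc, h₁, smul_mul_assoc, mul_assoc, h₂,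
      mul_smul_comm, smul_smul, ← mul_assoc]

variable [DecidableEq ι] {m : ι} {l : List ι}

theorem exists_prod_map_eq_smul_mul_prod_erase (hx : PairwiseQCommute 𝕜 x) (hm : m ∈ l) :
    ∃ c : 𝕜, (l.map x).prod = c • (x m * ((l.erase m).map x).prod) := by
  induction l with
  | nil => simp at hm
  | cons b t ih =>
    by_cases hbm : b = m
    · subst hbm
      exact ⟨1, by simp⟩
    · obtain ⟨c₁, h₁⟩ := ih ((List.mem_cons.mp hm).resolve_left (Ne.symm hbm))
      obtain ⟨c₂, h₂⟩ := hx b m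
      refine ⟨c₁ * c₂, ?_⟩
      rw [List.erase_cons_tail (by simpa using hbm), List.map_cons, List.prod_cons,
        List.map_cons, List.prod_cons, h₁, mul_smul_comm, ← mul_assoc, h₂, smul_mul_assoc,
        smul_smul, mul_assoc]

theorem exists_prod_map_eq_smul_prod_erase_mul (hx : PairwiseQCommute 𝕜 x) (hm : m ∈ l) :
    ∃ c : 𝕜, (l.map x).prod = c • (((l.erase m).map x).prod * x m) := by
  obtain ⟨c₁, h₁⟩ := hx.exists_prod_map_eq_smul_mul_prod_erase hm
  obtain ⟨c₂, h₂⟩ := hx.exists_mul_prod_map_eq_smul m (l.erase m)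
  exact ⟨c₁ * c₂, by rw [h₁, h₂, smul_smul]⟩

theorem mul_prod_map_eq_zero (hx : PairwiseQCommute 𝕜 x) (hsq : x m * x m = 0) (hm : m ∈ l) :
    x m * (l.map x).prod = 0 := by
  obtain ⟨c, hc⟩ := hx.exists_prod_map_eq_smul_mul_prod_erase hm
  rw [hc, mul_smul_comm, ← mul_assoc, hsq, zero_mul, smul_zero]

theorem prod_map_mul_eq_zero (hx : PairwiseQCommute 𝕜 x) (hsq : x m * x m = 0) (hm : m ∈ l) :
    (l.map x).prod * x m = 0 := by
  obtain ⟨c, hc⟩ := hx.exists_prod_map_eq_smul_prod_erase_mul hm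
  rw [hc, smul_mul_assoc, mul_assoc, hsq, mul_zero, smul_zero]

end PairwiseQCommute

theorem prod_map_mul_prod_map_eq_zero [Fintype ι] [DecidableEq ι] {x y : ι → R}
    (hx : PairwiseQCommute 𝕜 x) (hy : PairwiseQCommute 𝕜 y)
    (hxsq : ∀ i, x i * x i = 0) (hysq : ∀ i, y i * y i = 0) (hsum : ∑ i, x i * y i = 0)
    {l l' : List ι} (hcover : ∀ i, i ∈ l ∨ i ∈ l') {m : ι} (hm : m ∈ l) (hm' : m ∈ l') :
    (l.map x).prod * (l'.map y).prod = 0 := by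
  obtain ⟨c, hc⟩ := hx.exists_prod_map_eq_smul_prod_erase_mul hm
  obtain ⟨c', hc'⟩ := hy.exists_prod_map_eq_smul_mul_prod_erase hm'
  set A := ((l.erase m).map x).prod
  set B := ((l'.erase m).map y).prod
  have hterm : ∀ i ≠ m, A * (x i * y i) * B = 0 := by
    intro i hi
    rcases hcover i with h | h
    · rw [← mul_assoc, hx.prod_map_mul_eq_zero (hxsq i) ((List.mem_erase_of_ne hi).2 h),
        zero_mul, zero_mul]
    · rw [mul_assoc, mul_assoc, hy.mul_prod_map_eq_zero (hysq i) ((List.mem_erase_of_ne hi).2 h),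
        mul_zero, mul_zero]
  have hmiddle : A * (x m * y m) * B = 0 := by
    rw [← Finset.sum_eq_single m (fun i _ hi => hterm i hi)
      (fun h => absurd (Finset.mem_univ m) h), ← Finset.sum_mul,
      ← Finset.mul_sum, hsum, mul_zero, zero_mul]
  rw [hc, hc', smul_mul_smul_comm, ← mul_assoc, mul_assoc A, hmiddle, smul_zero]

end PairwiseQCommute

theorem sum_sum_ite_smul {ι S M : Type*} [Fintype ι] [DecidableEq ι] [Semiring S]
    [AddCommMonoid M] [Module S M] (a₀ b₀ : ι) (c : S) (f : ι → ι → M) :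
    ∑ a, ∑ b, (if a = a₀ ∧ b = b₀ then c else 0) • f a b = c • f a₀ b₀ := by
  simp [ite_and, ite_smul, Finset.sum_ite_eq']

theorem one_add_mul_self_ofReal_ne_zero (r : ℝ) : (1 : ℂ) + r * r ≠ 0 := by
  exact_mod_cast (add_pos_of_pos_of_nonneg one_pos (mul_self_nonneg r)).ne'

namespace QSphere

variable {N : ℕ} {q : ℝ}

theorem Rm_self_right (a b k : Fin N) : Rm q a b k k = if a = k ∧ b = k then qc q else 0 := by
  unfold Rm; split_ifs <;> grind

theorem Rm_of_lt {k l : Fin N} (h : k < l) (a b : Fin N) :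
    Rm q a b k l = (if a = l ∧ b = k then 1 else 0) + (if a = k ∧ b = l then Qc q else 0) := by
  unfold Rm; split_ifs <;> grind

theorem Rbarinv_self_right (a b k : Fin N) :
    Rbarinv q a b k k = if a = k ∧ b = k then (qc q)⁻¹ else 0 := by
  unfold Rbarinv Rinv; split_ifs <;> grind

theorem Rbarinv_of_lt {k l : Fin N} (h : k < l) (a b : Fin N) :
    Rbarinv q a b k l
      = (if a = l ∧ b = k then 1 else 0) + (if a = k ∧ b = l then -Qc q else 0) := by
  unfold Rbarinv Rinv; split_ifs <;> grind

theorem mkAlgHom_eq_zero_of_rel {x : FB N} (h : LambdaRel N q x 0) :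
    RingQuot.mkAlgHom ℂ (LambdaRel N q) x = 0 := by
  rw [RingQuot.mkAlgHom_rel ℂ h, map_zero]

theorem zeta_mul_zeta_add_smul_sum (k l : Fin N) :
    Zeta N q k * Zeta N q l
      + qc q • ∑ a, ∑ b, Rm q a b k l • (Zeta N q a * Zeta N q b) = 0 := by
  simpa only [map_add, map_mul, map_smul, map_sum, Zeta] using mkAlgHom_eq_zero_of_rel (.r11 k l)

theorem zetas_mul_zetas_add_smul_sum (k l : Fin N) :
    Zetas N q k * Zetas N q l
      + (qc q)⁻¹ • ∑ a, ∑ b, Rbarinv q a b k l • (Zetas N q a * Zetas N q b) = 0 := by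
  simpa only [map_add, map_mul, map_smul, map_sum, Zetas] using mkAlgHom_eq_zero_of_rel (.r12 k l)

theorem qc_ne_zero (hq : q ≠ 0) : qc q ≠ 0 :=
  Complex.ofReal_ne_zero.mpr hq

theorem zeta_mul_self (i : Fin N) : Zeta N q i * Zeta N q i = 0 := by
  have h := zeta_mul_zeta_add_smul_sum (q := q) i i
  simp only [Rm_self_right, sum_sum_ite_smul] at h
  have h' : ((1 : ℂ) + qc q * qc q) • (Zeta N q i * Zeta N q i) = 0 := by
    rw [← h]; module
  exact (smul_eq_zero.mp h').resolve_left (one_add_mul_self_ofReal_ne_zero q)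

theorem zetas_mul_self (i : Fin N) : Zetas N q i * Zetas N q i = 0 := by
  have h := zetas_mul_zetas_add_smul_sum (q := q) i i
  simp only [Rbarinv_self_right, sum_sum_ite_smul] at h
  have h' : ((1 : ℂ) + (qc q)⁻¹ * (qc q)⁻¹) • (Zetas N q i * Zetas N q i) = 0 := by
    rw [← h]; module
  refine (smul_eq_zero.mp h').resolve_left ?_
  simpa [qc] using one_add_mul_self_ofReal_ne_zero q⁻¹

theorem zeta_mul_zeta_of_lt (hq : q ≠ 0) {k l : Fin N} (h : k < l) :
    Zeta N q l * Zeta N q k = (-qc q) • (Zeta N q k * Zeta N q l) := by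
  have hr := zeta_mul_zeta_add_smul_sum (q := q) k l
  simp only [Rm_of_lt h, add_smul, Finset.sum_add_distrib, sum_sum_ite_smul, one_smul] at hr
  have hqc := qc_ne_zero hq
  -- `1 + q Q = q²`
  linear_combination (norm := skip) (qc q)⁻¹ • hr
  unfold Qc
  match_scalars <;> field_simp <;> ring

theorem zetas_mul_zetas_of_lt (hq : q ≠ 0) {k l : Fin N} (h : k < l) :
    Zetas N q l * Zetas N q k = (-(qc q)⁻¹) • (Zetas N q k * Zetas N q l) := by
  have hr := zetas_mul_zetas_add_smul_sum (q := q) k l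
  simp only [Rbarinv_of_lt h, add_smul, Finset.sum_add_distrib, sum_sum_ite_smul, one_smul] at hr
  have hqc := qc_ne_zero hq
  linear_combination (norm := skip) qc q • hr
  unfold Qc
  match_scalars <;> field_simp <;> ring

theorem pairwiseQCommute_zeta (hq : q ≠ 0) : PairwiseQCommute ℂ (Zeta N q) :=
  .of_lt (neg_ne_zero.mpr (qc_ne_zero hq)) fun _ _ => zeta_mul_zeta_of_lt hq

theorem pairwiseQCommute_zetas (hq : q ≠ 0) : PairwiseQCommute ℂ (Zetas N q) :=
  .of_lt (neg_ne_zero.mpr (inv_ne_zero (qc_ne_zero hq))) fun _ _ => zetas_mul_zetas_of_lt hq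

theorem sum_zeta_mul_zetas : ∑ i, Zeta N q i * Zetas N q i = 0 := by
  have h14 := mkAlgHom_eq_zero_of_rel (N := N) (q := q) .r14
  have h15 := mkAlgHom_eq_zero_of_rel (N := N) (q := q) .r15
  simp only [map_add, map_mul, map_smul, map_sum] at h14 h15
  rwa [h15, add_zero] at h14

end QSphere

open QSphere in
theorem stmt17_general (N : ℕ) (q : ℝ) (hq : q ≠ -1 ∧ q ≠ 0 ∧ q ≠ 1)
    (J K : Finset (Fin N)) (hUnion : J ∪ K = Finset.univ) (hInter : (J ∩ K).Nonempty) :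
    ((J.sort (· ≤ ·)).map (Zeta N q)).prod * ((K.sort (· ≤ ·)).map (Zetas N q)).prod
      = 0 := by
  obtain ⟨m, hm⟩ := hInter
  rw [Finset.mem_inter] at hm
  have hcover (i : Fin N) : i ∈ J.sort (· ≤ ·) ∨ i ∈ K.sort (· ≤ ·) := by
    simpa only [Finset.mem_sort, ← Finset.mem_union, hUnion] using Finset.mem_univ i
  exact prod_map_mul_prod_map_eq_zero (pairwiseQCommute_zeta hq.2.1)
    (pairwiseQCommute_zetas hq.2.1) zeta_mul_self zetas_mul_self sum_zeta_mul_zetas hcover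
    ((J.mem_sort _).2 hm.1) ((K.mem_sort _).2 hm.2)

open QSphere in
/-- if `J ∪ K = {1,…,N}` and `J ∩ K ≠ ∅`, then the product
`ζ_{j_1}⋯ζ_{j_μ} ζ*_{k_1}⋯ζ*_{k_ν}` (indices in increasing order) vanishes in `Λ`. -/
theorem stmt17 (N : ℕ) (hN : 2 ≤ N) (q : ℝ) (hq : q ≠ -1 ∧ q ≠ 0 ∧ q ≠ 1)
    (J K : Finset (Fin N)) (hUnion : J ∪ K = Finset.univ) (hInter : (J ∩ K).Nonempty) :
    ((J.sort (· ≤ ·)).map (Zeta N q)).prod * ((K.sort (· ≤ ·)).map (Zetas N q)).prod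
      = 0 :=
  stmt17_general N q hq J K hUnion hInter
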